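/- arXiv:1205.5453 — 6 statements merged into one kernel-verified Lean document; each statement's English description precedes it below -/
import Mathlib

section
/- If f is MT-convex on I, a, b ∈ I with a < b, and f is integrable on [a,b], then f((a+b)/2) ≤ (1/(b-a)) ∫_a^b f(x) dx. -/
/-! At `t = 1/2` both MT-convexity weights equal `1/2`, so an MT-convex function is midpoint
convex. Pairing `x` with its reflection `a + b - x` then gives
`f ((a + b) / 2) ≤ (f x + f (a + b - x)) / 2` on `[a, b]`, and integrating over `[a, b]`,
where the reflection preserves the integral, yields the inequality. -/

open MeasureTheory intervalIntegral Set

lemma midpoint_le_of_mt_convex {I : Set ℝ} {f : ℝ → ℝ}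
    (hf : ∀ x ∈ I, ∀ y ∈ I, ∀ t ∈ Ioo (0:ℝ) 1,
      f (t * x + (1 - t) * y) ≤
        Real.sqrt t / (2 * Real.sqrt (1 - t)) * f x +
        Real.sqrt (1 - t) / (2 * Real.sqrt t) * f y)
    {x y : ℝ} (hx : x ∈ I) (hy : y ∈ I) :
    f ((x + y) / 2) ≤ (f x + f y) / 2 := by
  have hweight : Real.sqrt (1 / 2) / (2 * Real.sqrt (1 / 2)) = 1 / 2 := by
    have : Real.sqrt (1 / 2 : ℝ) ≠ 0 := by positivity
    field_simp
  have h := hf x hx y hy (1 / 2) ⟨by norm_num, by norm_num⟩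
  rw [show (1 : ℝ) - 1 / 2 = 1 / 2 by norm_num, hweight] at h
  calc f ((x + y) / 2) = f (1 / 2 * x + 1 / 2 * y) := by ring_nf
    _ ≤ _ := h
    _ = (f x + f y) / 2 := by ring

lemma integral_comp_reflect (f : ℝ → ℝ) (a b : ℝ) :
    ∫ x in a..b, f (a + b - x) = ∫ x in a..b, f x := by
  rw [integral_comp_sub_left, add_sub_cancel_right, add_sub_cancel_left]

lemma mul_midpoint_le_integral {f : ℝ → ℝ} {a b : ℝ} (hab : a ≤ b)
    (hint : IntervalIntegrable f volume a b)
    (hsymm : ∀ x ∈ Icc a b, f ((a + b) / 2) ≤ (f x + f (a + b - x)) / 2) :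
    (b - a) * f ((a + b) / 2) ≤ ∫ x in a..b, f x := by
  have hint_reflect : IntervalIntegrable (fun x => f (a + b - x)) volume a b := by
    simpa using (hint.comp_sub_left (a + b)).symm
  calc (b - a) * f ((a + b) / 2) = ∫ _ in a..b, f ((a + b) / 2) := by simp
    _ ≤ ∫ x in a..b, (f x + f (a + b - x)) / 2 :=
        integral_mono_on hab intervalIntegrable_const ((hint.add hint_reflect).div_const 2) hsymm
    _ = ∫ x in a..b, f x := by
        rw [intervalIntegral.integral_div, integral_add hint hint_reflect, integral_comp_reflect]
        ring

theorem mt_convex_hadamard_left_general (I : Set ℝ) (hI : Convex ℝ I) (f : ℝ → ℝ)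
    (hf : ∀ x ∈ I, ∀ y ∈ I, ∀ t ∈ Set.Ioo (0:ℝ) 1,
      f (t * x + (1 - t) * y) ≤
        Real.sqrt t / (2 * Real.sqrt (1 - t)) * f x +
        Real.sqrt (1 - t) / (2 * Real.sqrt t) * f y)
    (a b : ℝ) (ha : a ∈ I) (hb : b ∈ I) (hab : a < b)
    (hint : IntervalIntegrable f MeasureTheory.volume a b) :
    f ((a + b) / 2) ≤ (1 / (b - a)) * ∫ x in a..b, f x := by
  have hsub : Icc a b ⊆ I := hI.ordConnected.out ha hb
  have hsymm : ∀ x ∈ Icc a b, f ((a + b) / 2) ≤ (f x + f (a + b - x)) / 2 := by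
    intro x hx
    have hx' : a + b - x ∈ Icc a b := ⟨by linarith [hx.2], by linarith [hx.1]⟩
    simpa using midpoint_le_of_mt_convex hf (hsub hx) (hsub hx')
  have hmain := mul_midpoint_le_integral hab.le hint hsymm
  rw [one_div_mul_eq_div, le_div_iff₀ (sub_pos.mpr hab), mul_comm]
  exact hmain

theorem mt_convex_hadamard_left (I : Set ℝ) (hI : Convex ℝ I) (f : ℝ → ℝ)
    (hf0 : ∀ x ∈ I, 0 ≤ f x)
    (hf : ∀ x ∈ I, ∀ y ∈ I, ∀ t ∈ Set.Ioo (0:ℝ) 1,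
      f (t * x + (1 - t) * y) ≤
        Real.sqrt t / (2 * Real.sqrt (1 - t)) * f x +
        Real.sqrt (1 - t) / (2 * Real.sqrt t) * f y)
    (a b : ℝ) (ha : a ∈ I) (hb : b ∈ I) (hab : a < b)
    (hint : IntervalIntegrable f MeasureTheory.volume a b) :
    f ((a + b) / 2) ≤ (1 / (b - a)) * ∫ x in a..b, f x :=
  mt_convex_hadamard_left_general I hI f hf a b ha hb hab hint
end

section
/- If f is MT-convex on I and a, b ∈ I, then (π/2) f((a+b)/2) ≤ f(a) + f(b). -/
theorem mt_convex_pi_half (I : Set ℝ) (hI : Convex ℝ I) (f : ℝ → ℝ)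
    (hf0 : ∀ x ∈ I, 0 ≤ f x)
    (hf : ∀ x ∈ I, ∀ y ∈ I, ∀ t ∈ Set.Ioo (0:ℝ) 1,
      f (t * x + (1 - t) * y) ≤
        Real.sqrt t / (2 * Real.sqrt (1 - t)) * f x +
        Real.sqrt (1 - t) / (2 * Real.sqrt t) * f y)
    (a b : ℝ) (ha : a ∈ I) (hb : b ∈ I) :
    Real.pi / 2 * f ((a + b) / 2) ≤ f a + f b := by
  have hm : (a + b) / 2 ∈ I := by
    have := hI ha hb (by norm_num : (0:ℝ) ≤ 1/2) (by norm_num : (0:ℝ) ≤ 1/2) (by norm_num)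
    have heq : (1/2 : ℝ) • a + (1/2 : ℝ) • b = (a + b) / 2 := by
      simp [smul_eq_mul]; ring
    rwa [heq] at this
  have h := hf a ha b hb (1/2) ⟨by norm_num, by norm_num⟩
  have hs : Real.sqrt (1/2) ≠ 0 := by positivity
  have hc : Real.sqrt (1/2) / (2 * Real.sqrt (1/2)) = 1/2 := by
    field_simp
  rw [show (1:ℝ) - 1/2 = 1/2 by norm_num, hc,
    show (1/2 : ℝ) * a + (1/2 : ℝ) * b = (a + b) / 2 by ring] at h
  have hfm : 0 ≤ f ((a + b) / 2) := hf0 _ hm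
  nlinarith [Real.pi_le_four]
end

section
/- If f and g are MT-convex on I, a, b ∈ I with a < b, and fg is integrable on [a,b], then (1/(b-a)) ∫_a^b μ(x) f(x) g(x) dx ≤ (1/12)[f(a)g(a)+f(b)g(b)] + (1/24)[f(a)g(b)+f(b)g(a)], where μ(x) = (b-x)(x-a)/(b-a)². -/
/-!
At `t = (x - a) / (b - a)` the MT-convexity inequality for the pair `(b, a)` reads
`2 √((x - a)(b - x)) f(x) ≤ (x - a) f(b) + (b - x) f(a)`. Multiplying this with the same bound
for `g`, the square roots combine into `4 (x - a)(b - x)`, which is `4 (b - a)² μ(x)`. Hence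
`μ f g` is dominated by a quadratic polynomial in `x`, whose integral over `[a, b]` gives the
constants `1/12` and `1/24`.
-/

open Set intervalIntegral

structure MTConvexOn (s : Set ℝ) (f : ℝ → ℝ) : Prop where
  convex : Convex ℝ s
  nonneg : ∀ x ∈ s, 0 ≤ f x
  le : ∀ x ∈ s, ∀ y ∈ s, ∀ t ∈ Ioo (0 : ℝ) 1,
    f (t * x + (1 - t) * y) ≤ √t / (2 * √(1 - t)) * f x + √(1 - t) / (2 * √t) * f y

namespace MTConvexOn

variable {s : Set ℝ} {f g : ℝ → ℝ} {a b x : ℝ}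

theorem two_sqrt_mul_le (hf : MTConvexOn s f) (ha : a ∈ s) (hb : b ∈ s) (hx : x ∈ Ioo a b) :
    2 * √((x - a) * (b - x)) * f x ≤ (x - a) * f b + (b - x) * f a := by
  obtain ⟨hax, hxb⟩ := hx
  have hc : 0 < b - a := by linarith
  set t := (x - a) / (b - a)
  have ht : t ∈ Ioo (0 : ℝ) 1 := ⟨div_pos (by linarith) hc, (div_lt_one hc).2 (by linarith)⟩
  have h1t : 1 - t = (b - x) / (b - a) := by simp only [t]; field_simp; ring
  have hmid : t * b + (1 - t) * a = x := by rw [h1t]; simp only [t]; field_simp; ring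
  have hle := hf.le b hb a ha t ht
  rw [hmid, h1t, Real.sqrt_div' _ hc.le, Real.sqrt_div' _ hc.le] at hle
  calc 2 * √((x - a) * (b - x)) * f x
      ≤ 2 * (√(x - a) * √(b - x)) * (√(x - a) / √(b - a) / (2 * (√(b - x) / √(b - a))) * f b
          + √(b - x) / √(b - a) / (2 * (√(x - a) / √(b - a))) * f a) := by
        rw [Real.sqrt_mul (sub_pos.2 hax).le]; gcongr
    _ = √(x - a) ^ 2 * f b + √(b - x) ^ 2 * f a := by field_simp
    _ = (x - a) * f b + (b - x) * f a := by
        rw [Real.sq_sqrt (sub_pos.2 hax).le, Real.sq_sqrt (sub_pos.2 hxb).le]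

theorem four_mul_mul_le (hf : MTConvexOn s f) (hg : MTConvexOn s g) (ha : a ∈ s) (hb : b ∈ s)
    (hx : x ∈ Icc a b) :
    4 * ((x - a) * (b - x)) * (f x * g x) ≤
      ((x - a) * f b + (b - x) * f a) * ((x - a) * g b + (b - x) * g a) := by
  obtain ⟨hax, hxb⟩ := hx
  have hfa := hf.nonneg a ha
  have hfb := hf.nonneg b hb
  have hga := hg.nonneg a ha
  have hgb := hg.nonneg b hb
  have hxa : 0 ≤ x - a := sub_nonneg.2 hax
  have hbx : 0 ≤ b - x := sub_nonneg.2 hxb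
  rcases (mul_nonneg hxa hbx).eq_or_lt with hzero | hpos
  · rw [← hzero, mul_zero, zero_mul]; positivity
  have hx : x ∈ Ioo a b := by
    constructor <;> nlinarith
  have hxs : x ∈ s := hf.convex.ordConnected.out ha hb ⟨hax, hxb⟩
  calc 4 * ((x - a) * (b - x)) * (f x * g x)
      = (2 * √((x - a) * (b - x)) * f x) * (2 * √((x - a) * (b - x)) * g x) := by
        linear_combination (-4 * f x * g x) * Real.mul_self_sqrt hpos.le
    _ ≤ _ := mul_le_mul (hf.two_sqrt_mul_le ha hb hx) (hg.two_sqrt_mul_le ha hb hx)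
        (by have := hg.nonneg x hxs; positivity) (by positivity)

end MTConvexOn

theorem integral_affine_mul_affine (a b p q r s : ℝ) :
    ∫ x in a..b, ((x - a) * p + (b - x) * q) * ((x - a) * r + (b - x) * s) =
      (b - a) ^ 3 * ((p * r + q * s) / 3 + (p * s + q * r) / 6) := by
  have hderiv (x : ℝ) : HasDerivAt
      (fun x => (p - q) * (r - s) * (x - a) ^ 3 / 3
        + (b - a) * (q * (r - s) + s * (p - q)) * (x - a) ^ 2 / 2 + (b - a) ^ 2 * q * s * x)
      (((x - a) * p + (b - x) * q) * ((x - a) * r + (b - x) * s)) x := by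
    have hx : HasDerivAt (fun x : ℝ => x - a) 1 x := (hasDerivAt_id x).sub_const a
    refine (((hx.pow 3).const_mul ((p - q) * (r - s))).div_const 3
      |>.add (((hx.pow 2).const_mul ((b - a) * (q * (r - s) + s * (p - q)))).div_const 2)
      |>.add ((hasDerivAt_id x).const_mul ((b - a) ^ 2 * q * s))).congr_deriv ?_
    push_cast; ring
  rw [integral_eq_sub_of_hasDerivAt (fun x _ => hderiv x)
    ((by fun_prop : Continuous _).intervalIntegrable _ _)]
  ring

theorem mt_convex_product_integral (I : Set ℝ) (hI : Convex ℝ I) (f g : ℝ → ℝ)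
    (hf0 : ∀ x ∈ I, 0 ≤ f x)
    (hf : ∀ x ∈ I, ∀ y ∈ I, ∀ t ∈ Set.Ioo (0:ℝ) 1,
      f (t * x + (1 - t) * y) ≤
        Real.sqrt t / (2 * Real.sqrt (1 - t)) * f x +
        Real.sqrt (1 - t) / (2 * Real.sqrt t) * f y)
    (hg0 : ∀ x ∈ I, 0 ≤ g x)
    (hg : ∀ x ∈ I, ∀ y ∈ I, ∀ t ∈ Set.Ioo (0:ℝ) 1,
      g (t * x + (1 - t) * y) ≤
        Real.sqrt t / (2 * Real.sqrt (1 - t)) * g x +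
        Real.sqrt (1 - t) / (2 * Real.sqrt t) * g y)
    (a b : ℝ) (ha : a ∈ I) (hb : b ∈ I) (hab : a < b)
    (hint : IntervalIntegrable (fun x => f x * g x) MeasureTheory.volume a b) :
    (1 / (b - a)) * ∫ x in a..b, ((b - x) * (x - a) / (b - a) ^ 2) * (f x * g x) ≤
      (1 / 12) * (f a * g a + f b * g b) + (1 / 24) * (f a * g b + f b * g a) := by
  have hF : MTConvexOn I f := ⟨hI, hf0, hf⟩
  have hG : MTConvexOn I g := ⟨hI, hg0, hg⟩
  have hc : 0 < b - a := sub_pos.2 hab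
  have hbound : ∀ x ∈ Icc a b, (b - x) * (x - a) / (b - a) ^ 2 * (f x * g x) ≤
      ((x - a) * f b + (b - x) * f a) * ((x - a) * g b + (b - x) * g a) / (4 * (b - a) ^ 2) := by
    intro x hx
    calc (b - x) * (x - a) / (b - a) ^ 2 * (f x * g x)
        = 4 * ((x - a) * (b - x)) * (f x * g x) / (4 * (b - a) ^ 2) := by field_simp
      _ ≤ _ := div_le_div_of_nonneg_right (hF.four_mul_mul_le hG ha hb hx) (by positivity)
  have hμ : ContinuousOn (fun x => (b - x) * (x - a) / (b - a) ^ 2) (uIcc a b) := by fun_prop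
  calc (1 / (b - a)) * ∫ x in a..b, (b - x) * (x - a) / (b - a) ^ 2 * (f x * g x)
      ≤ (1 / (b - a)) * ∫ x in a..b,
          ((x - a) * f b + (b - x) * f a) * ((x - a) * g b + (b - x) * g a) / (4 * (b - a) ^ 2) := by
        gcongr
        exact integral_mono_on hab.le (hint.continuousOn_mul hμ)
          ((by fun_prop : Continuous _).intervalIntegrable _ _) hbound
    _ = (1 / 12) * (f a * g a + f b * g b) + (1 / 24) * (f a * g b + f b * g a) := by
        rw [integral_div, integral_affine_mul_affine]
        field_simp
        ring
end

section
/- If f and g are similarly ordered, nonnegative, MT-convex functions on I, a, b ∈ I with a < b, and fg is integrable on [a,b], then (1/(b-a)) ∫_a^b μ(x) f(x) g(x) dx ≤ (f(a)g(a)+f(b)g(b))/8, where μ(x) = (b-x)(x-a)/(b-a)². -/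
private lemma key_pointwise (fa fb ga gb fx gx t : ℝ) (ht : 0 < t) (ht1 : t < 1)
    (hfa : 0 ≤ fa) (hfb : 0 ≤ fb) (hga : 0 ≤ ga) (hgb : 0 ≤ gb)
    (hso : fb * ga + fa * gb ≤ fa * ga + fb * gb)
    (hfx0 : 0 ≤ fx) (hgx0 : 0 ≤ gx)
    (hfx : fx ≤ Real.sqrt t / (2 * Real.sqrt (1 - t)) * fb +
      Real.sqrt (1 - t) / (2 * Real.sqrt t) * fa)
    (hgx : gx ≤ Real.sqrt t / (2 * Real.sqrt (1 - t)) * gb +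
      Real.sqrt (1 - t) / (2 * Real.sqrt t) * ga) :
    t * (1 - t) * (fx * gx) ≤ (t * (fb * gb) + (1 - t) * (fa * ga)) / 4 := by
  set u := Real.sqrt t with hu
  set v := Real.sqrt (1 - t) with hv
  have hu0 : 0 < u := Real.sqrt_pos.mpr ht
  have hv0 : 0 < v := Real.sqrt_pos.mpr (by linarith)
  have hu2 : u ^ 2 = t := Real.sq_sqrt ht.le
  have hv2 : v ^ 2 = 1 - t := Real.sq_sqrt (by linarith)
  have hA : 0 ≤ u / (2 * v) := by positivity
  have hB : 0 ≤ v / (2 * u) := by positivity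
  have hRf : 0 ≤ u / (2 * v) * fb + v / (2 * u) * fa := by positivity
  have hRg : 0 ≤ u / (2 * v) * gb + v / (2 * u) * ga := by positivity
  have hprod : fx * gx ≤
      (u / (2 * v) * fb + v / (2 * u) * fa) * (u / (2 * v) * gb + v / (2 * u) * ga) :=
    mul_le_mul hfx hgx hgx0 hRf
  have hmul : t * (1 - t) * (fx * gx) ≤
      t * (1 - t) * ((u / (2 * v) * fb + v / (2 * u) * fa) *
        (u / (2 * v) * gb + v / (2 * u) * ga)) :=
    mul_le_mul_of_nonneg_left hprod (by nlinarith)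
  have heq : t * (1 - t) * ((u / (2 * v) * fb + v / (2 * u) * fa) *
      (u / (2 * v) * gb + v / (2 * u) * ga)) =
      (t ^ 2 * (fb * gb) + t * (1 - t) * (fb * ga + fa * gb) + (1 - t) ^ 2 * (fa * ga)) / 4 := by
    rw [← hv2, ← hu2]
    field_simp
    ring
  rw [heq] at hmul
  have hts : 0 ≤ t * (1 - t) := by nlinarith
  nlinarith [mul_le_mul_of_nonneg_left hso hts]

theorem mt_convex_similarly_ordered_integral (I : Set ℝ) (hI : Convex ℝ I) (f g : ℝ → ℝ)
    (hso : ∀ x ∈ I, ∀ y ∈ I, 0 ≤ (f x - f y) * (g x - g y))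
    (hf0 : ∀ x ∈ I, 0 ≤ f x)
    (hf : ∀ x ∈ I, ∀ y ∈ I, ∀ t ∈ Set.Ioo (0:ℝ) 1,
      f (t * x + (1 - t) * y) ≤
        Real.sqrt t / (2 * Real.sqrt (1 - t)) * f x +
        Real.sqrt (1 - t) / (2 * Real.sqrt t) * f y)
    (hg0 : ∀ x ∈ I, 0 ≤ g x)
    (hg : ∀ x ∈ I, ∀ y ∈ I, ∀ t ∈ Set.Ioo (0:ℝ) 1,
      g (t * x + (1 - t) * y) ≤
        Real.sqrt t / (2 * Real.sqrt (1 - t)) * g x +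
        Real.sqrt (1 - t) / (2 * Real.sqrt t) * g y)
    (a b : ℝ) (ha : a ∈ I) (hb : b ∈ I) (hab : a < b)
    (hint : IntervalIntegrable (fun x => f x * g x) MeasureTheory.volume a b) :
    (1 / (b - a)) * ∫ x in a..b, ((b - x) * (x - a) / (b - a) ^ 2) * (f x * g x) ≤
      (f a * g a + f b * g b) / 8 := by
  have hba : 0 < b - a := by linarith
  have hIcc : Set.Icc a b ⊆ I := by
    have := hI.segment_subset ha hb
    rwa [segment_eq_Icc hab.le] at this
  set F := f a * g a with hF
  set G := f b * g b with hG
  have hF0 : 0 ≤ F := mul_nonneg (hf0 a ha) (hg0 a ha)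
  have hG0 : 0 ≤ G := mul_nonneg (hf0 b hb) (hg0 b hb)
  have hso' : f b * g a + f a * g b ≤ F + G := by
    have := hso a ha b hb
    nlinarith
  -- pointwise bound
  have hpt : ∀ x ∈ Set.Icc a b,
      ((b - x) * (x - a) / (b - a) ^ 2) * (f x * g x) ≤
        ((x - a) * G + (b - x) * F) / (4 * (b - a)) := by
    intro x hx
    obtain ⟨hax, hxb⟩ := hx
    rcases eq_or_lt_of_le hax with rfl | hax'
    · simp only [sub_self, mul_zero, zero_mul, zero_div, zero_add]
      exact div_nonneg (mul_nonneg (by linarith) hF0) (by linarith)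
    rcases eq_or_lt_of_le hxb with rfl | hxb'
    · simp only [sub_self, zero_mul, zero_div, mul_zero, add_zero]
      exact div_nonneg (mul_nonneg (by linarith) hG0) (by linarith)
    have hxI : x ∈ I := hIcc ⟨hax, hxb⟩
    set t := (x - a) / (b - a) with htdef
    have ht0 : 0 < t := div_pos (by linarith) hba
    have ht1 : t < 1 := by
      rw [div_lt_one hba]; linarith
    have hne : b - a ≠ 0 := ne_of_gt hba
    have hxeq : x = t * b + (1 - t) * a := by
      rw [htdef]; field_simp; ring
    have hfx := hf b hb a ha t ⟨ht0, ht1⟩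
    have hgx := hg b hb a ha t ⟨ht0, ht1⟩
    rw [← hxeq] at hfx hgx
    have key := key_pointwise (f a) (f b) (g a) (g b) (f x) (g x) t ht0 ht1
      (hf0 a ha) (hf0 b hb) (hg0 a ha) (hg0 b hb) hso' (hf0 x hxI) (hg0 x hxI) hfx hgx
    have hmu : (b - x) * (x - a) / (b - a) ^ 2 = t * (1 - t) := by
      rw [htdef]; field_simp; ring
    have hrhs : ((x - a) * G + (b - x) * F) / (4 * (b - a)) =
        (t * (f b * g b) + (1 - t) * (f a * g a)) / 4 := by
      rw [htdef, div_eq_div_iff (by linarith : (0:ℝ) < 4 * (b - a)).ne' (by norm_num : (4:ℝ) ≠ 0)]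
      field_simp
      ring
    rw [hmu, hrhs]
    exact key
  -- integrability
  have hcont : ContinuousOn (fun x : ℝ => (b - x) * (x - a) / (b - a) ^ 2) (Set.uIcc a b) := by
    apply ContinuousOn.div_const
    exact (ContinuousOn.mul (by fun_prop) (by fun_prop))
  have hL : IntervalIntegrable
      (fun x => ((b - x) * (x - a) / (b - a) ^ 2) * (f x * g x)) MeasureTheory.volume a b :=
    hint.continuousOn_mul hcont
  have hR : IntervalIntegrable
      (fun x => ((x - a) * G + (b - x) * F) / (4 * (b - a))) MeasureTheory.volume a b := by
    apply Continuous.intervalIntegrable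
    fun_prop
  have hmono := intervalIntegral.integral_mono_on hab.le hL hR hpt
  -- compute the RHS integral
  have hcomp : (∫ x in a..b, ((x - a) * G + (b - x) * F) / (4 * (b - a))) =
      (b - a) * (F + G) / 8 := by
    have hfun : (fun x : ℝ => ((x - a) * G + (b - x) * F) / (4 * (b - a))) =
        fun x : ℝ => (G - F) / (4 * (b - a)) * x + (b * F - a * G) / (4 * (b - a)) := by
      funext x; field_simp; ring
    rw [hfun, intervalIntegral.integral_add
      ((by fun_prop : Continuous fun x : ℝ => (G - F) / (4 * (b - a)) * x).intervalIntegrable a b)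
      (intervalIntegrable_const),
      intervalIntegral.integral_const_mul, integral_id,
      intervalIntegral.integral_const, smul_eq_mul]
    field_simp
    ring
  rw [hcomp] at hmono
  have : (1 / (b - a)) * ∫ x in a..b, ((b - x) * (x - a) / (b - a) ^ 2) * (f x * g x) ≤
      (1 / (b - a)) * ((b - a) * (F + G) / 8) := by
    apply mul_le_mul_of_nonneg_left hmono
    positivity
  calc (1 / (b - a)) * ∫ x in a..b, ((b - x) * (x - a) / (b - a) ^ 2) * (f x * g x)
      ≤ (1 / (b - a)) * ((b - a) * (F + G) / 8) := this
    _ = (F + G) / 8 := by field_simp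
  -- note goal RHS is (f a * g a + f b * g b) / 8 = (F + G)/8 definitionally by set
end

section
/- If f and g are convex nonnegative functions on [a,b] with a < b, then (1/(b-a)) ∫_a^b f(x)g(x) dx ≤ (1/3)M(a,b) + (1/6)N(a,b), where M(a,b) = f(a)g(a)+f(b)g(b) and N(a,b) = f(a)g(b)+f(b)g(a). -/
/-! On `[a, b]`, written as `x = (b - a) t + a` with `t ∈ [0, 1]`, each of `f`, `g` lies below
its chord `(1 - t) f(a) + t f(b)`; as both are nonnegative, `f g` lies below the product of the
two chords. That product is a quadratic in `t` whose mean over `[0, 1]` is `M / 3 + N / 6`,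
since `(1 - t)²`, `t²` and `t (1 - t)` have means `1/3`, `1/3` and `1/6`. -/

open intervalIntegral Set

theorem ConvexOn.le_chord {f : ℝ → ℝ} {a b t : ℝ} (hf : ConvexOn ℝ (Icc a b) f) (hab : a ≤ b)
    (ht : t ∈ Icc (0 : ℝ) 1) : f ((b - a) * t + a) ≤ (1 - t) * f a + t * f b := by
  have h := hf.2 (left_mem_Icc.2 hab) (right_mem_Icc.2 hab) (sub_nonneg.2 ht.2) ht.1
    (sub_add_cancel 1 t)
  simp only [smul_eq_mul] at h
  rwa [show (1 - t) * a + t * b = (b - a) * t + a by ring] at h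

theorem ConvexOn.mul_le_chord_mul_chord {f g : ℝ → ℝ} {a b t : ℝ}
    (hf : ConvexOn ℝ (Icc a b) f) (hg : ConvexOn ℝ (Icc a b) g)
    (hf0 : ∀ x ∈ Icc a b, 0 ≤ f x) (hg0 : ∀ x ∈ Icc a b, 0 ≤ g x) (hab : a ≤ b)
    (ht : t ∈ Icc (0 : ℝ) 1) :
    f ((b - a) * t + a) * g ((b - a) * t + a) ≤
      ((1 - t) * f a + t * f b) * ((1 - t) * g a + t * g b) := by
  have hx : (b - a) * t + a ∈ Icc a b := by
    constructor <;> nlinarith [ht.1, ht.2]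
  exact mul_le_mul (hf.le_chord hab ht) (hg.le_chord hab ht) (hg0 _ hx)
    ((hf0 _ hx).trans (hf.le_chord hab ht))

theorem integral_unitInterval_affine_mul_affine (p q r s : ℝ) :
    ∫ t in (0 : ℝ)..1, ((1 - t) * p + t * q) * ((1 - t) * r + t * s) =
      (p * r + q * s) / 3 + (p * s + q * r) / 6 := by
  have hF : ∀ t ∈ uIcc (0 : ℝ) 1, HasDerivAt
      (fun t : ℝ => p * r * t + (p * s + q * r - 2 * p * r) * t ^ 2 / 2
        + (p * r + q * s - p * s - q * r) * t ^ 3 / 3)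
      (((1 - t) * p + t * q) * ((1 - t) * r + t * s)) t := by
    intro t _
    have h := (((hasDerivAt_id' t).const_mul (p * r)).add
      (((hasDerivAt_pow 2 t).const_mul (p * s + q * r - 2 * p * r)).div_const 2)).add
      (((hasDerivAt_pow 3 t).const_mul (p * r + q * s - p * s - q * r)).div_const 3)
    exact h.congr_deriv (by push_cast; ring)
  rw [integral_eq_sub_of_hasDerivAt hF (Continuous.intervalIntegrable (by fun_prop) _ _)]
  ring

theorem IntervalIntegrable.comp_affine_unitInterval {F : ℝ → ℝ} {a b : ℝ} (hab : a ≠ b)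
    (hF : IntervalIntegrable F MeasureTheory.volume a b) :
    IntervalIntegrable (fun t => F ((b - a) * t + a)) MeasureTheory.volume 0 1 := by
  have h := (hF.comp_add_right a).comp_mul_left (c := b - a)
  rwa [sub_self, zero_div, div_self (sub_ne_zero.2 hab.symm)] at h

theorem one_div_sub_mul_intervalIntegral_eq_integral_unitInterval (F : ℝ → ℝ) {a b : ℝ}
    (hab : a ≠ b) :
    (1 / (b - a)) * ∫ x in a..b, F x = ∫ t in (0 : ℝ)..1, F ((b - a) * t + a) := by
  have h := smul_integral_comp_mul_add (a := 0) (b := 1) F (b - a) a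
  simp only [mul_zero, zero_add, mul_one, sub_add_cancel, smul_eq_mul] at h
  rw [← h, ← mul_assoc, one_div_mul_cancel (sub_ne_zero.2 hab.symm), one_mul]

theorem pachpatte_first (a b : ℝ) (hab : a < b) (f g : ℝ → ℝ)
    (hf : ConvexOn ℝ (Set.Icc a b) f) (hg : ConvexOn ℝ (Set.Icc a b) g)
    (hf0 : ∀ x ∈ Set.Icc a b, 0 ≤ f x) (hg0 : ∀ x ∈ Set.Icc a b, 0 ≤ g x)
    (hint : IntervalIntegrable (fun x => f x * g x) MeasureTheory.volume a b) :
    (1 / (b - a)) * ∫ x in a..b, f x * g x ≤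
      (1 / 3) * (f a * g a + f b * g b) + (1 / 6) * (f a * g b + f b * g a) := by
  rw [one_div_sub_mul_intervalIntegral_eq_integral_unitInterval _ hab.ne]
  calc ∫ t in (0 : ℝ)..1, f ((b - a) * t + a) * g ((b - a) * t + a)
      ≤ ∫ t in (0 : ℝ)..1, ((1 - t) * f a + t * f b) * ((1 - t) * g a + t * g b) :=
        integral_mono_on zero_le_one (hint.comp_affine_unitInterval hab.ne)
          (Continuous.intervalIntegrable (by fun_prop) _ _)
          fun t ht => hf.mul_le_chord_mul_chord hg hf0 hg0 hab.le ht
    _ = _ := by rw [integral_unitInterval_affine_mul_affine]; ring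
end

section
/- If f and g are convex nonnegative functions on [a,b] with a < b, then 2 f((a+b)/2) g((a+b)/2) ≤ (1/(b-a)) ∫_a^b f(x)g(x) dx + (1/6)M(a,b) + (1/3)N(a,b), where M(a,b) = f(a)g(a)+f(b)g(b) and N(a,b) = f(a)g(b)+f(b)g(a). -/
/-!
Write `x = (1 - t) a + t b` and `y = a + b - x = t a + (1 - t) b`, which have midpoint `m = (a + b) / 2`.
Midpoint convexity of `f` and `g` gives `4 f(m) g(m) ≤ (f x + f y)(g x + g y)`, and bounding the cross
terms `f x g y + f y g x` by convexity along `[a, b]` gives `2 t (1 - t) M + (t² + (1 - t)²) N`.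
Integrating over `x ∈ [a, b]`, the reflection `x ↦ a + b - x` preserves `∫ f g`, and the weights
integrate to `1 / 3` and `2 / 3`.
-/

open MeasureTheory intervalIntegral Set

section ConvexProduct

variable {E : Type*} [AddCommGroup E] [Module ℝ E] {s : Set E} {f g : E → ℝ} {x y : E}

theorem midpoint_eq_half_smul_add_half_smul (x y : E) :
    midpoint ℝ x y = (1 / 2 : ℝ) • x + (1 / 2 : ℝ) • y := by
  rw [midpoint_eq_smul_add, smul_add, invOf_eq_inv, one_div]

theorem ConvexOn.map_midpoint_le (hf : ConvexOn ℝ s f) (hx : x ∈ s) (hy : y ∈ s) :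
    f (midpoint ℝ x y) ≤ (f x + f y) / 2 := by
  have h := hf.2 hx hy (by norm_num : (0 : ℝ) ≤ 1 / 2) (by norm_num : (0 : ℝ) ≤ 1 / 2)
    (by norm_num)
  rw [← midpoint_eq_half_smul_add_half_smul, smul_eq_mul, smul_eq_mul] at h
  linarith

variable (hf : ConvexOn ℝ s f) (hg : ConvexOn ℝ s g)
  (hf₀ : ∀ z ∈ s, 0 ≤ f z) (hg₀ : ∀ z ∈ s, 0 ≤ g z)
include hf hg hf₀ hg₀

theorem ConvexOn.four_mul_map_midpoint_mul_le (hx : x ∈ s) (hy : y ∈ s) :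
    4 * (f (midpoint ℝ x y) * g (midpoint ℝ x y)) ≤ (f x + f y) * (g x + g y) := by
  have hfm : 2 * f (midpoint ℝ x y) ≤ f x + f y := by linarith [hf.map_midpoint_le hx hy]
  have hgm : 2 * g (midpoint ℝ x y) ≤ g x + g y := by linarith [hg.map_midpoint_le hx hy]
  have key := mul_le_mul hfm hgm (by linarith [hg₀ _ (hf.1.midpoint_mem hx hy)])
    (by linarith [hf₀ x hx, hf₀ y hy])
  linarith

theorem ConvexOn.cross_mul_add_cross_mul_le (hx : x ∈ s) (hy : y ∈ s) {t : ℝ}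
    (ht : t ∈ Icc 0 1) :
    f ((1 - t) • x + t • y) * g (t • x + (1 - t) • y) +
        f (t • x + (1 - t) • y) * g ((1 - t) • x + t • y) ≤
      2 * t * (1 - t) * (f x * g x + f y * g y) +
        (t ^ 2 + (1 - t) ^ 2) * (f x * g y + f y * g x) := by
  obtain ⟨ht₀, ht₁⟩ := ht
  have ht₀' : 0 ≤ 1 - t := sub_nonneg.2 ht₁
  have hu := hf.1 hx hy ht₀' ht₀ (sub_add_cancel 1 t)
  have hv := hf.1 hx hy ht₀ ht₀' (add_sub_cancel t 1)
  have hfx := hf₀ x hx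
  have hfy := hf₀ y hy
  have h₁ := mul_le_mul (hf.2 hx hy ht₀' ht₀ (sub_add_cancel 1 t))
    (hg.2 hx hy ht₀ ht₀' (add_sub_cancel t 1)) (hg₀ _ hv) (by simp only [smul_eq_mul]; positivity)
  have h₂ := mul_le_mul (hf.2 hx hy ht₀ ht₀' (add_sub_cancel t 1))
    (hg.2 hx hy ht₀' ht₀ (sub_add_cancel 1 t)) (hg₀ _ hu) (by simp only [smul_eq_mul]; positivity)
  simp only [smul_eq_mul] at h₁ h₂
  linear_combination h₁ + h₂

theorem ConvexOn.four_mul_map_midpoint_mul_le_add (hx : x ∈ s) (hy : y ∈ s) {t : ℝ}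
    (ht : t ∈ Icc 0 1) :
    4 * (f (midpoint ℝ x y) * g (midpoint ℝ x y)) ≤
      f ((1 - t) • x + t • y) * g ((1 - t) • x + t • y) +
        f (t • x + (1 - t) • y) * g (t • x + (1 - t) • y) +
      (2 * t * (1 - t) * (f x * g x + f y * g y) +
        (t ^ 2 + (1 - t) ^ 2) * (f x * g y + f y * g x)) := by
  have hu := hf.1 hx hy (sub_nonneg.2 ht.2) ht.1 (sub_add_cancel 1 t)
  have hv := hf.1 hx hy ht.1 (sub_nonneg.2 ht.2) (add_sub_cancel t 1)
  have hmid : midpoint ℝ ((1 - t) • x + t • y) (t • x + (1 - t) • y) = midpoint ℝ x y := by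
    rw [midpoint_eq_smul_add, midpoint_eq_smul_add]
    congr 1
    module
  rw [← hmid]
  linear_combination hf.four_mul_map_midpoint_mul_le hg hf₀ hg₀ hu hv +
    hf.cross_mul_add_cross_mul_le hg hf₀ hg₀ hx hy ht

end ConvexProduct

theorem ConvexOn.four_mul_map_midpoint_mul_le_Icc {a b : ℝ} (hab : a < b) {f g : ℝ → ℝ}
    (hf : ConvexOn ℝ (Icc a b) f) (hg : ConvexOn ℝ (Icc a b) g)
    (hf₀ : ∀ x ∈ Icc a b, 0 ≤ f x) (hg₀ : ∀ x ∈ Icc a b, 0 ≤ g x) {x : ℝ} (hx : x ∈ Icc a b) :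
    4 * (f ((a + b) / 2) * g ((a + b) / 2)) ≤
      f x * g x + f (a + b - x) * g (a + b - x) +
        (2 * ((x - a) / (b - a)) * (1 - (x - a) / (b - a)) * (f a * g a + f b * g b) +
          (((x - a) / (b - a)) ^ 2 + (1 - (x - a) / (b - a)) ^ 2) * (f a * g b + f b * g a)) := by
  have hba : 0 < b - a := sub_pos.2 hab
  set t := (x - a) / (b - a)
  have ht : t ∈ Icc 0 1 :=
    ⟨div_nonneg (by linarith [hx.1]) hba.le, div_le_one_of_le₀ (by linarith [hx.2]) hba.le⟩
  have hmid : midpoint ℝ a b = (a + b) / 2 := by simp [midpoint_eq_smul_add]; ring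
  have hx' : (1 - t) • a + t • b = x := by simp only [t, smul_eq_mul]; field_simp; ring
  have hy' : t • a + (1 - t) • b = a + b - x := by simp only [t, smul_eq_mul]; field_simp; ring
  simpa only [hmid, hx', hy'] using hf.four_mul_map_midpoint_mul_le_add hg hf₀ hg₀
    (left_mem_Icc.2 hab.le) (right_mem_Icc.2 hab.le) ht

theorem integral_comp_sub_div_sub (h : ℝ → ℝ) {a b : ℝ} (hab : a ≠ b) :
    ∫ x in a..b, h ((x - a) / (b - a)) = (b - a) * ∫ t in 0..1, h t := by
  have hba : b - a ≠ 0 := sub_ne_zero.2 hab.symm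
  simp_rw [sub_div]
  rw [integral_comp_div_sub h hba, sub_self, div_sub_div_same, div_self hba, smul_eq_mul]

theorem integral_weights_unitInterval (M N : ℝ) :
    ∫ t in (0 : ℝ)..1, (2 * t * (1 - t) * M + (t ^ 2 + (1 - t) ^ 2) * N) = M / 3 + 2 * N / 3 := by
  have h (t : ℝ) : HasDerivAt (fun t => N * t - (N - M) * t ^ 2 + 2 * (N - M) / 3 * t ^ 3)
      (2 * t * (1 - t) * M + (t ^ 2 + (1 - t) ^ 2) * N) t := by
    refine ((((hasDerivAt_id t).const_mul N).sub ((hasDerivAt_pow 2 t).const_mul (N - M))).add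
      ((hasDerivAt_pow 3 t).const_mul (2 * (N - M) / 3))).congr_deriv ?_
    push_cast
    ring
  rw [integral_eq_sub_of_hasDerivAt (fun t _ => h t)
    (Continuous.intervalIntegrable (by fun_prop) _ _)]
  ring

theorem pachpatte_second (a b : ℝ) (hab : a < b) (f g : ℝ → ℝ)
    (hf : ConvexOn ℝ (Set.Icc a b) f) (hg : ConvexOn ℝ (Set.Icc a b) g)
    (hf0 : ∀ x ∈ Set.Icc a b, 0 ≤ f x) (hg0 : ∀ x ∈ Set.Icc a b, 0 ≤ g x)
    (hint : IntervalIntegrable (fun x => f x * g x) MeasureTheory.volume a b) :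
    2 * f ((a + b) / 2) * g ((a + b) / 2) ≤
      (1 / (b - a)) * ∫ x in a..b, f x * g x +
        (1 / 6) * (f a * g a + f b * g b) + (1 / 3) * (f a * g b + f b * g a) := by
  set M := f a * g a + f b * g b
  set N := f a * g b + f b * g a
  set w : ℝ → ℝ := fun t => 2 * t * (1 - t) * M + (t ^ 2 + (1 - t) ^ 2) * N
  have hrefl : IntervalIntegrable (fun x => f (a + b - x) * g (a + b - x)) volume a b := by
    simpa using (hint.comp_sub_left (a + b)).symm
  have hrefl_eq : ∫ x in a..b, f (a + b - x) * g (a + b - x) = ∫ x in a..b, f x * g x := by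
    simpa using integral_comp_sub_left (a := a) (b := b) (fun x => f x * g x) (a + b)
  have hw : IntervalIntegrable (fun x => w ((x - a) / (b - a))) volume a b :=
    Continuous.intervalIntegrable (by fun_prop) _ _
  have key := integral_mono_on hab.le intervalIntegrable_const ((hint.add hrefl).add hw)
    fun x hx => hf.four_mul_map_midpoint_mul_le_Icc hab hg hf0 hg0 hx
  rw [intervalIntegral.integral_const, integral_add (hint.add hrefl) hw, integral_add hint hrefl,
    hrefl_eq, integral_comp_sub_div_sub w hab.ne, integral_weights_unitInterval,
    smul_eq_mul] at key
  -- the integral in the statement extends over the two boundary terms as well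
  have hsplit : ∫ x in a..b, (f x * g x + 1 / 6 * M + 1 / 3 * N) =
      (∫ x in a..b, f x * g x) + (b - a) * (M / 6 + N / 3) := by
    rw [integral_add (hint.add intervalIntegrable_const) intervalIntegrable_const,
      integral_add hint intervalIntegrable_const, intervalIntegral.integral_const,
      intervalIntegral.integral_const, smul_eq_mul, smul_eq_mul]
    ring
  rw [hsplit, one_div_mul_eq_div, le_div_iff₀ (sub_pos.2 hab)]
  linarith
end
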